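/- arXiv:1008.4017 — 4 statements merged into one kernel-verified Lean document; each statement's English description precedes it below -/
import Mathlib

section
/- Let (T_n)_{n∈ℕ} be a sequence of bounded linear operators on a complex Banach space X. Then the following are equivalent: (i) the sequence (T_n)_{n∈ℕ} has property 𝒜; (ii) for every sequence of real numbers (θ_n)_{n∈ℕ}, the sequence (e^{iθ_n} T_n)_{n∈ℕ} has property 𝒜. -/
open Filter Topology

/-- The upper density of a set of natural numbers. -/
noncomputable def upperDensity (B : Set ℕ) : ℝ :=
  Filter.limsup (fun N : ℕ => ((B ∩ Set.Icc 1 N).ncard : ℝ) / N) Filter.atTop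

/-- A sequence of operators has property 𝒜. -/
def HasPropertyA {X : Type*} [NormedAddCommGroup X] [NormedSpace ℂ X]
    (T : ℕ → X →L[ℂ] X) : Prop :=
  ∀ U : Set X, IsOpen U → U.Nonempty →
    ∃ x : X, 0 < upperDensity {n : ℕ | T n x ∈ U}

private noncomputable def cnt (B : Set ℕ) (N : ℕ) : ℝ := ((B ∩ Set.Icc 1 N).ncard : ℝ) / N

lemma cnt_nonneg (B : Set ℕ) (N : ℕ) : 0 ≤ cnt B N := by unfold cnt; positivity

lemma cnt_le_one (B : Set ℕ) (N : ℕ) : cnt B N ≤ 1 := by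
  unfold cnt
  rcases Nat.eq_zero_or_pos N with h | h
  · simp [h]
  · rw [div_le_one (by exact_mod_cast h)]
    have h1 : (B ∩ Set.Icc 1 N).ncard ≤ (Set.Icc 1 N).ncard :=
      Set.ncard_le_ncard Set.inter_subset_right (Set.finite_Icc _ _)
    have h2 : (Set.Icc 1 N).ncard = N := by
      rw [← Finset.coe_Icc, Set.ncard_coe_finset, Nat.card_Icc]; omega
    exact_mod_cast h1.trans_eq h2

lemma cnt_bounded (B : Set ℕ) : IsBoundedUnder (· ≤ ·) atTop (cnt B) :=
  isBoundedUnder_of ⟨1, fun N => cnt_le_one B N⟩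

lemma cnt_cobounded (B : Set ℕ) : IsCoboundedUnder (· ≤ ·) atTop (cnt B) := by
  have : IsBoundedUnder (· ≥ ·) atTop (cnt B) := isBoundedUnder_of ⟨0, fun N => cnt_nonneg B N⟩
  exact this.isCoboundedUnder_le

lemma upperDensity_eq (B : Set ℕ) : upperDensity B = limsup (cnt B) atTop := rfl

lemma cnt_mono {A B : Set ℕ} (h : A ⊆ B) (N : ℕ) : cnt A N ≤ cnt B N := by
  unfold cnt
  rcases Nat.eq_zero_or_pos N with h0 | h0
  · simp [h0]
  · rw [div_le_div_iff_of_pos_right (by exact_mod_cast h0)]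
    exact_mod_cast Set.ncard_le_ncard (Set.inter_subset_inter_left _ h)
      ((Set.finite_Icc 1 N).inter_of_right _)

lemma upperDensity_mono {A B : Set ℕ} (h : A ⊆ B) : upperDensity A ≤ upperDensity B := by
  rw [upperDensity_eq, upperDensity_eq]
  exact limsup_le_limsup (Eventually.of_forall (cnt_mono h)) (cnt_cobounded A) (cnt_bounded B)

lemma cnt_union_le (k : ℕ) (A : ℕ → Set ℕ) (N : ℕ) :
    cnt (⋃ j ∈ Finset.range k, A j) N ≤ ∑ j ∈ Finset.range k, cnt (A j) N := by
  unfold cnt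
  rw [← Finset.sum_div]
  rcases Nat.eq_zero_or_pos N with h0 | h0
  · simp [h0]
  · rw [div_le_div_iff_of_pos_right (by exact_mod_cast h0)]
    have key : ((⋃ j ∈ Finset.range k, A j) ∩ Set.Icc 1 N).ncard ≤
        ∑ j ∈ Finset.range k, (A j ∩ Set.Icc 1 N).ncard := by
      induction k with
      | zero => simp
      | succ k ih =>
        rw [Finset.range_add_one, Finset.sum_insert (by simp), Finset.set_biUnion_insert,
          Set.union_inter_distrib_right]
        exact (Set.ncard_union_le _ _).trans (Nat.add_le_add_left ih _)
    exact_mod_cast key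

lemma exists_pos_of_union {k : ℕ} {A : ℕ → Set ℕ}
    (hpos : 0 < upperDensity (⋃ j ∈ Finset.range k, A j)) :
    ∃ j ∈ Finset.range k, 0 < upperDensity (A j) := by
  set S := ⋃ j ∈ Finset.range k, A j with hS
  have hk : k ≠ 0 := by
    rintro rfl
    have hz : upperDensity S = 0 := by
      rw [upperDensity_eq]
      have : cnt S = fun _ => 0 := funext fun N => by simp [cnt, hS]
      rw [this, limsup_const]
    rw [hz] at hpos; exact lt_irrefl _ hpos
  have hkpos : (0:ℝ) < k := by exact_mod_cast Nat.pos_of_ne_zero hk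
  set δ := upperDensity S with hδ
  have freq : ∃ᶠ N in atTop, δ/2 < cnt S N := by
    apply frequently_lt_of_lt_limsup (cnt_cobounded S)
    rw [upperDensity_eq] at hδ
    rw [← hδ]; linarith
  have freq2 : ∃ᶠ N in atTop, ∃ j ∈ Finset.range k, δ/(2*k) ≤ cnt (A j) N := by
    refine freq.mono fun N hN => ?_
    by_contra hcon
    push_neg at hcon
    have hsum := cnt_union_le k A N
    have hlt : ∑ j ∈ Finset.range k, cnt (A j) N < ∑ j ∈ Finset.range k, δ/(2*k) :=
      Finset.sum_lt_sum_of_nonempty (Finset.nonempty_range_iff.2 hk) fun j hj => hcon j hj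
    rw [Finset.sum_const, Finset.card_range, nsmul_eq_mul] at hlt
    have : (k:ℝ) * (δ/(2*k)) = δ/2 := by field_simp
    rw [this] at hlt
    linarith
  obtain ⟨j, hj, hfreq⟩ : ∃ j ∈ Finset.range k, ∃ᶠ N in atTop, δ/(2*k) ≤ cnt (A j) N := by
    by_contra hcon
    push_neg at hcon
    have hev := (eventually_all_finset (Finset.range k)).2 hcon
    obtain ⟨N, hN1, hN2⟩ := (freq2.and_eventually hev).exists
    obtain ⟨j, hj, hjle⟩ := hN1
    exact absurd hjle (not_le.2 (hN2 j hj))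
  have hle : δ/(2*k) ≤ limsup (cnt (A j)) atTop :=
    le_limsup_of_frequently_le hfreq (cnt_bounded (A j))
  refine ⟨j, hj, ?_⟩
  rw [upperDensity_eq]
  exact lt_of_lt_of_le (by positivity) hle

set_option maxHeartbeats 1000000 in
theorem stmt4 {X : Type*} [NormedAddCommGroup X] [NormedSpace ℂ X]
    [CompleteSpace X] (T : ℕ → X →L[ℂ] X) :
    HasPropertyA T ↔
      ∀ θ : ℕ → ℝ,
        HasPropertyA (fun n : ℕ => Complex.exp (θ n * Complex.I) • T n) := by
  constructor
  · intro hT θ U hU hUne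
    obtain ⟨y, hy⟩ := hUne
    obtain ⟨r, hrpos, hball⟩ := Metric.isOpen_iff.1 hU y hy
    set ε := r/2 with hε
    have hεpos : 0 < ε := by positivity
    have hπ := Real.pi_pos
    set k : ℕ := ⌈4*Real.pi + 8*Real.pi*‖y‖/ε⌉₊ with hk
    have hkge : 4*Real.pi + 8*Real.pi*‖y‖/ε ≤ (k:ℝ) := Nat.le_ceil _
    have hy8 : (0:ℝ) ≤ 8*Real.pi*‖y‖/ε := by positivity
    have hkpos : (0:ℝ) < k := by linarith
    obtain ⟨x, hx⟩ := hT (Metric.ball y ε) Metric.isOpen_ball ⟨y, Metric.mem_ball_self hεpos⟩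
    set jdx : ℕ → ℕ := fun n => (⌊(k:ℝ) * Int.fract (θ n / (2*Real.pi))⌋).toNat with hjdx
    set A : ℕ → Set ℕ := fun j => {n | T n x ∈ Metric.ball y ε ∧ jdx n = j} with hA
    have hcover : {n | T n x ∈ Metric.ball y ε} ⊆ ⋃ j ∈ Finset.range k, A j := by
      intro n hn
      have hfr : 0 ≤ Int.fract (θ n / (2*Real.pi)) := Int.fract_nonneg _
      have hfr1 : Int.fract (θ n / (2*Real.pi)) < 1 := Int.fract_lt_one _
      have hjlt : jdx n < k := by
        have h1 : (k:ℝ) * Int.fract (θ n / (2*Real.pi)) < k := by nlinarith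
        have h2 : ⌊(k:ℝ) * Int.fract (θ n / (2*Real.pi))⌋ < (k:ℤ) :=
          Int.floor_lt.2 (by push_cast; exact h1)
        have hk0 : 0 < k := by exact_mod_cast hkpos
        simp only [hjdx]
        omega
      exact Set.mem_biUnion (Finset.mem_range.2 hjlt) ⟨hn, rfl⟩
    obtain ⟨j, hjmem, hjpos⟩ := exists_pos_of_union
      (lt_of_lt_of_le hx (upperDensity_mono hcover))
    set φ : ℝ := 2*Real.pi*j/k with hφ
    refine ⟨Complex.exp (-(φ:ℂ) * Complex.I) • x, lt_of_lt_of_le hjpos (upperDensity_mono ?_)⟩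
    rintro n ⟨hball', hjn⟩
    simp only [Set.mem_setOf_eq, ContinuousLinearMap.smul_apply]
    set t := Int.fract (θ n / (2*Real.pi)) with ht
    set s := 2*Real.pi*t - φ with hs
    -- bounds on s
    have h0 : (0:ℤ) ≤ ⌊(k:ℝ)*t⌋ :=
      Int.floor_nonneg.2 (mul_nonneg hkpos.le (ht ▸ Int.fract_nonneg _))
    have hjfloor : ((j:ℝ)) = (⌊(k:ℝ)*t⌋ : ℝ) := by
      rw [← hjn]
      simp only [hjdx, ← ht]
      exact_mod_cast Int.toNat_of_nonneg h0
    have hfl1 : ((⌊(k:ℝ)*t⌋ : ℝ)) ≤ (k:ℝ)*t := Int.floor_le _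
    have hfl2 : (k:ℝ)*t < (⌊(k:ℝ)*t⌋ : ℝ) + 1 := Int.lt_floor_add_one _
    have hs0 : 0 ≤ s := by
      rw [hs, hφ, sub_nonneg, div_le_iff₀ hkpos]
      nlinarith [hjfloor ▸ hfl1]
    have hs1 : s ≤ 2*Real.pi/k := by
      rw [hs, hφ]
      rw [sub_le_iff_le_add, ← add_div, le_div_iff₀ hkpos]
      nlinarith [hjfloor ▸ hfl2]
    have hsabs : |s| = s := abs_of_nonneg hs0
    have hsle1 : |s| ≤ 1 := by
      rw [hsabs]
      refine hs1.trans ?_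
      rw [div_le_one hkpos]; linarith
    -- rewrite the vector
    have heq : Complex.exp ((θ n:ℝ) * Complex.I) • (T n) (Complex.exp (-(φ:ℂ) * Complex.I) • x)
        = Complex.exp ((s:ℝ) * Complex.I) • T n x := by
      have hθ : (θ n : ℝ) = s + 2*Real.pi*(⌊θ n/(2*Real.pi)⌋:ℝ) + φ := by
        have h2π : (0:ℝ) < 2*Real.pi := by positivity
        have hfr := Int.floor_add_fract (θ n/(2*Real.pi))
        have h2 : ((⌊θ n / (2 * Real.pi)⌋:ℝ) + Int.fract (θ n / (2 * Real.pi))) * (2*Real.pi)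
            = θ n / (2 * Real.pi) * (2*Real.pi) := by rw [hfr]
        rw [div_mul_cancel₀ _ (ne_of_gt h2π)] at h2
        rw [hs, ht]; linarith
      have hsub : (θ n : ℝ) - φ = s + 2*Real.pi*(⌊θ n/(2*Real.pi)⌋:ℝ) := by linarith
      have harg : ((θ n : ℝ):ℂ) * Complex.I + -(φ:ℂ) * Complex.I
          = (s:ℂ)*Complex.I + ((⌊θ n/(2*Real.pi)⌋ : ℤ):ℂ) * (2*(Real.pi:ℂ)*Complex.I) := by
        have : (((θ n : ℝ) - φ : ℝ) : ℂ) = ((s + 2*Real.pi*(⌊θ n/(2*Real.pi)⌋:ℝ) : ℝ):ℂ) := by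
          exact_mod_cast congrArg (fun u : ℝ => (u:ℂ)) hsub
        push_cast at this
        rw [show ((θ n : ℝ):ℂ) * Complex.I + -(φ:ℂ) * Complex.I
            = (((θ n :ℝ):ℂ) - (φ:ℂ)) * Complex.I by ring, this]
        ring
      rw [map_smul, smul_smul, ← Complex.exp_add, harg, Complex.exp_add,
        Complex.exp_int_mul_two_pi_mul_I, mul_one]
    rw [heq]
    apply hball
    rw [Metric.mem_ball, dist_eq_norm]
    have h1 : ‖T n x - y‖ < ε := by
      rw [Metric.mem_ball, dist_eq_norm] at hball'; exact hball'
    have habs1 : ‖Complex.exp ((s:ℝ)*Complex.I)‖ = 1 := by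
      exact Complex.norm_exp_ofReal_mul_I s
    have habs2 : ‖Complex.exp ((s:ℝ)*Complex.I) - 1‖ ≤ 2*|s| := by
      have h1' : ‖(s:ℂ)*Complex.I‖ = |s| := by
        simp [Complex.norm_real]
      have h2' := Complex.norm_exp_sub_one_le (x := (s:ℝ)*Complex.I) (by rw [h1']; exact hsle1)
      rwa [h1'] at h2'
    have hsplit : Complex.exp ((s:ℝ)*Complex.I) • T n x - y
        = Complex.exp ((s:ℝ)*Complex.I) • (T n x - y) + (Complex.exp ((s:ℝ)*Complex.I) - 1) • y := by
      rw [smul_sub, sub_smul, one_smul]; abel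
    have hky : 2*(2*Real.pi/(k:ℝ))*‖y‖ < ε := by
      rw [show 2*(2*Real.pi/(k:ℝ))*‖y‖ = 4*Real.pi*‖y‖/(k:ℝ) by ring, div_lt_iff₀ hkpos]
      have h8 : 8*Real.pi*‖y‖/ε * ε = 8*Real.pi*‖y‖ := by
        field_simp
      nlinarith [norm_nonneg y, mul_le_mul_of_nonneg_right hkge hεpos.le]
    have hterm2 : ‖Complex.exp ((s:ℝ)*Complex.I) - 1‖ * ‖y‖ < ε := by
      have : ‖Complex.exp ((s:ℝ)*Complex.I) - 1‖ * ‖y‖ ≤ 2*|s| * ‖y‖ :=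
        mul_le_mul_of_nonneg_right habs2 (norm_nonneg y)
      have h2s : 2*|s| * ‖y‖ ≤ 2*(2*Real.pi/(k:ℝ))*‖y‖ := by
        have := hsabs ▸ hs1
        nlinarith [norm_nonneg y]
      linarith
    calc ‖Complex.exp ((s:ℝ)*Complex.I) • T n x - y‖
        ≤ ‖Complex.exp ((s:ℝ)*Complex.I) • (T n x - y)‖
          + ‖(Complex.exp ((s:ℝ)*Complex.I) - 1) • y‖ := by rw [hsplit]; exact norm_add_le _ _
      _ = ‖T n x - y‖ + ‖Complex.exp ((s:ℝ)*Complex.I) - 1‖ * ‖y‖ := by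
          rw [norm_smul, norm_smul, habs1, one_mul]
      _ < ε + ε := by linarith
      _ = r := by rw [hε]; ring
  · intro h
    have h0 := h (fun _ => 0)
    simp only [Complex.ofReal_zero, zero_mul, Complex.exp_zero, one_smul] at h0
    exact h0
end

section
/- Let B be the unweighted unilateral backward shift on ℓ²(ℕ) (B(w_1, w_2, w_3, …) = (w_2, w_3, …)) and define λ_{2n} = 2^n for n ≥ 1 and λ_{2n+1} = 2^n for n ≥ 0. Then the set A = {2n : n ∈ ℕ} has lower and upper density 1/2, lim_{n∈A, n→∞} λ_n/λ_{n+1} = 1, the sequence (λ_n B^n)_{n∈ℕ} is frequently universal, and B is not recurrent. -/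
open Filter Topology

/-- The lower density of a set of natural numbers. -/
noncomputable def lowerDensity (B : Set ℕ) : ℝ :=
  Filter.liminf (fun N : ℕ => ((B ∩ Set.Icc 1 N).ncard : ℝ) / N) Filter.atTop

/-- A sequence of operators is frequently universal. -/
def FrequentlyUniversal {X : Type*} [NormedAddCommGroup X] [NormedSpace ℂ X]
    (T : ℕ → X →L[ℂ] X) : Prop :=
  ∃ x : X, ∀ U : Set X, IsOpen U → U.Nonempty →
    0 < lowerDensity {n : ℕ | T n x ∈ U}

/-- Recurrence for an operator. -/
def RecurrentOp {X : Type*} [NormedAddCommGroup X] [NormedSpace ℂ X]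
    (T : X →L[ℂ] X) : Prop :=
  ∀ U : Set X, IsOpen U → U.Nonempty →
    ∃ k : ℕ, 0 < k ∧ (U ∩ (T ^ k : X →L[ℂ] X) ⁻¹' U).Nonempty

open scoped ENNReal

noncomputable section

abbrev EE := lp (fun _ : ℕ => ℂ) 2

namespace FUaux

lemma q2 : (2 : ℝ≥0∞).toReal = 2 := by norm_num
lemma q2pos : 0 < (2 : ℝ≥0∞).toReal := by norm_num

/-- complex number from a rational pair -/
def cq (q : ℚ × ℚ) : ℂ := (q.1 : ℝ) + (q.2 : ℝ) * Complex.I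

lemma cq_zero : cq 0 = 0 := by simp [cq]

/-- a "packet": finitely many lp-singles starting at offset o -/
def pk (o Len : ℕ) (v : ℕ → ℂ) : EE := ∑ i ∈ Finset.range Len, lp.single 2 (o + i) (v i)

lemma pk_apply_in (o Len : ℕ) (v : ℕ → ℂ) {i : ℕ} (hi : i < Len) :
    pk o Len v (o + i) = v i := by
  rw [pk, lp.coeFn_sum, Finset.sum_apply]
  rw [Finset.sum_eq_single i]
  · exact lp.single_apply_self (E := fun _ : ℕ => ℂ) 2 (o + i) (v i)
  · intro b _ hbi
    exact lp.single_apply_ne (E := fun _ : ℕ => ℂ) 2 (o + b) (v b) (by omega)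
  · intro h
    exact absurd (Finset.mem_range.2 hi) h

lemma pk_apply_out (o Len : ℕ) (v : ℕ → ℂ) {j : ℕ} (hj : j < o ∨ o + Len ≤ j) :
    pk o Len v j = 0 := by
  rw [pk, lp.coeFn_sum, Finset.sum_apply]
  apply Finset.sum_eq_zero
  intro i hi
  rw [Finset.mem_range] at hi
  exact lp.single_apply_ne (E := fun _ : ℕ => ℂ) 2 (o + i) (v i) (by omega)

lemma pk_norm_le (o Len : ℕ) (v : ℕ → ℂ) :
    ‖pk o Len v‖ ≤ ∑ i ∈ Finset.range Len, ‖v i‖ := by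
  refine (norm_sum_le _ _).trans (le_of_eq ?_)
  refine Finset.sum_congr rfl fun i _ => ?_
  exact lp.norm_single (E := fun _ : ℕ => ℂ) (by norm_num) (o + i) (v i)


/-- data for a finsupp: the complex sequence -/
def yfd (d : ℕ →₀ ℚ × ℚ) : ℕ → ℂ := fun i => cq (d i)

/-- support bound -/
def Ld (d : ℕ →₀ ℚ × ℚ) : ℕ := d.support.sup id + 1

lemma yfd_eq_zero {d : ℕ →₀ ℚ × ℚ} {i : ℕ} (h : Ld d ≤ i) : yfd d i = 0 := by
  have hi : i ∉ d.support := by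
    intro hi
    have := Finset.le_sup (f := id) hi
    simp only [id] at this
    rw [Ld] at h
    omega
  rw [yfd, Finsupp.notMem_support_iff.1 hi, cq_zero]

def Yd (d : ℕ →₀ ℚ × ℚ) : EE := pk 0 (Ld d) (yfd d)
def Md (d : ℕ →₀ ℚ × ℚ) : ℝ := ∑ i ∈ Finset.range (Ld d), ‖yfd d i‖

/-- enumeration of all pairs (finsupp, epsilon index) -/
def e : ℕ → (ℕ →₀ ℚ × ℚ) × ℕ := (exists_surjective_nat ((ℕ →₀ ℚ × ℚ) × ℕ)).choose

lemma e_surj : Function.Surjective e :=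
  (exists_surjective_nat ((ℕ →₀ ℚ × ℚ) × ℕ)).choose_spec

def φc (c : ℕ) : ℕ →₀ ℚ × ℚ := (e c).1
def kk (c : ℕ) : ℕ := (e c).2
def yf (c : ℕ) : ℕ → ℂ := yfd (φc c)
def L (c : ℕ) : ℕ := Ld (φc c)
def Y (c : ℕ) : EE := Yd (φc c)
def M (c : ℕ) : ℝ := Md (φc c)

lemma exists_g (c : ℕ) : ∃ m : ℕ, L c ≤ m ∧ 1 ≤ m ∧
    M c ≤ 2 ^ m ∧ (2 * (kk c) + 2 : ℝ) ≤ 2 ^ m := by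
  obtain ⟨n, hn⟩ := pow_unbounded_of_one_lt (max (M c) (2 * (kk c) + 2 : ℝ))
    (by norm_num : (1:ℝ) < 2)
  refine ⟨L c + n + 1, by omega, by omega, ?_, ?_⟩
  · exact ((le_max_left _ _).trans hn.le).trans
      (pow_le_pow_right₀ one_le_two (by omega))
  · exact ((le_max_right _ _).trans hn.le).trans
      (pow_le_pow_right₀ one_le_two (by omega))

def g (c : ℕ) : ℕ := (exists_g c).choose
lemma L_le_g (c : ℕ) : L c ≤ g c := (exists_g c).choose_spec.1
lemma one_le_g (c : ℕ) : 1 ≤ g c := (exists_g c).choose_spec.2.1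
lemma M_le_g (c : ℕ) : M c ≤ 2 ^ (g c) := (exists_g c).choose_spec.2.2.1
lemma kk_le_g (c : ℕ) : (2 * (kk c) + 2 : ℝ) ≤ 2 ^ (g c) := (exists_g c).choose_spec.2.2.2

def ψ (s : ℕ) : ℕ := if g (Nat.unpair s).1 ≤ s then (Nat.unpair s).1 else 0

lemma ψ_pair (c : ℕ) : ψ (Nat.pair c (g c)) = c := by
  have h1 : g c ≤ Nat.pair c (g c) := Nat.right_le_pair c (g c)
  simp [ψ, Nat.unpair_pair, h1]

lemma g_ψ_le (s : ℕ) : g (ψ s) ≤ s + g 0 := by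
  rw [ψ]
  split
  · omega
  · omega

def ν (t : ℕ) : ℕ := padicValNat 2 (t + 1)
def col (t : ℕ) : ℕ := ψ (ν t)

lemma g_col_le (t : ℕ) : g (col t) ≤ ν t + g 0 := g_ψ_le (ν t)

lemma ν_even (u : ℕ) : ν (2 * u) = 0 :=
  padicValNat.eq_zero_of_not_dvd (by omega)

lemma ν_odd (u : ℕ) : ν (2 * u + 1) = 1 + ν u := by
  rw [ν, ν, show 2 * u + 1 + 1 = 2 * (u + 1) by ring,
    padicValNat.mul (by norm_num) (by omega), padicValNat.self (by norm_num)]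

def F (T : ℕ) : ℕ := ∑ t ∈ Finset.range T, ν t

lemma F_double (V : ℕ) : F (2 * V) = V + F V := by
  induction V with
  | zero => simp [F]
  | succ V ih =>
    rw [show 2 * (V + 1) = (2 * V + 1) + 1 by ring, F, Finset.sum_range_succ,
      Finset.sum_range_succ, ← F, ih, ν_even, ν_odd]
    have hF : F (V + 1) = F V + ν V := Finset.sum_range_succ ν V
    omega

lemma F_mono : Monotone F := fun a b h =>
  Finset.sum_le_sum_of_subset (Finset.range_subset_range.2 h)

lemma F_le (T : ℕ) : F T ≤ 2 * T := by
  induction T using Nat.strong_induction_on with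
  | _ T ih =>
    match T with
    | 0 => simp [F]
    | 1 => simp [F, ν, padicValNat.one]
    | (T+2) =>
      set V := (T + 2 + 1) / 2 with hV
      have h1 : T + 2 ≤ 2 * V := by omega
      have h2 : 2 * V ≤ T + 3 := by omega
      have h3 : V < T + 2 := by omega
      have h4 := F_mono h1
      rw [F_double] at h4
      have h5 := ih V h3
      omega

/-- the times -/
def τ : ℕ → ℕ
  | 0 => 2 * g (col 0) + 2
  | t + 1 => τ t + 2 * g (col t) + 2 * g (col (t + 1)) + 6

lemma τ_zero : τ 0 = 2 * g (col 0) + 2 := rfl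

lemma τ_even (t : ℕ) : 2 * (τ t / 2) = τ t := by
  induction t with
  | zero => have := τ_zero; omega
  | succ t ih => have : τ t + 2 * g (col t) + 2 * g (col (t + 1)) + 6 = τ (t + 1) := rfl; omega

lemma τ_ge (t : ℕ) : 2 * g (col t) + 2 * t + 2 ≤ τ t := by
  induction t with
  | zero => have := τ_zero; omega
  | succ t ih => have : τ t + 2 * g (col t) + 2 * g (col (t + 1)) + 6 = τ (t + 1) := rfl; omega

lemma τ_succ_le (t : ℕ) : τ t + 2 * g (col t) + 2 * g (col (t + 1)) + 6 = τ (t + 1) := rfl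

lemma τ_mono : StrictMono τ := strictMono_nat_of_lt_succ fun t => by rw [← τ_succ_le]; omega

lemma τ_sep {t s : ℕ} (h : t < s) :
    τ t + 2 * g (col t) + 2 * g (col s) + 2 * (s - t) ≤ τ s := by
  induction s with
  | zero => omega
  | succ s ih =>
    rcases Nat.lt_succ_iff_lt_or_eq.1 h with h' | h'
    · have := ih h'
      rw [← τ_succ_le]
      omega
    · subst h'
      rw [← τ_succ_le]
      omega

/-- linear upper bound for τ -/
lemma τ_formula (T : ℕ) : τ T = 2 * g (col 0) + 2 +
    ∑ t ∈ Finset.range T, (2 * g (col t) + 2 * g (col (t + 1)) + 6) := by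
  induction T with
  | zero => simp [τ]
  | succ T ih => rw [← τ_succ_le, ih, Finset.sum_range_succ]; ring

lemma τ_le (T : ℕ) : τ T ≤ (4 * g 0 + 14) * (T + 1) := by
  have h1 : ∀ t, g (col t) ≤ ν t + g 0 := g_col_le
  have hν0 : ν 0 = 0 := by rw [ν]; exact padicValNat.one
  have h2 : ∑ t ∈ Finset.range T, (2 * g (col t) + 2 * g (col (t + 1)) + 6)
      ≤ 2 * F T + 2 * F (T + 1) + (2 * g 0 + 2 * g 0 + 6) * T := by
    calc ∑ t ∈ Finset.range T, (2 * g (col t) + 2 * g (col (t + 1)) + 6)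
        ≤ ∑ t ∈ Finset.range T, (2 * (ν t + g 0) + 2 * (ν (t + 1) + g 0) + 6) := by
          apply Finset.sum_le_sum
          intro t _
          have := h1 t
          have := h1 (t + 1)
          omega
      _ = 2 * F T + 2 * (∑ t ∈ Finset.range T, ν (t + 1)) + (2 * g 0 + 2 * g 0 + 6) * T := by
          simp only [mul_add, Finset.sum_add_distrib, Finset.sum_const, Finset.card_range,
            smul_eq_mul, F, Finset.mul_sum]
          ring
      _ ≤ 2 * F T + 2 * F (T + 1) + (2 * g 0 + 2 * g 0 + 6) * T := by
          have : ∑ t ∈ Finset.range T, ν (t + 1) ≤ F (T + 1) := by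
            rw [F, Finset.sum_range_succ']
            omega
          omega
  have h3 := F_le T
  have h4 := F_le (T + 1)
  have h5 := τ_formula T
  have h0 : g (col 0) ≤ g 0 := by have := h1 0; omega
  have h6 : τ T ≤ 2 * g 0 + 2 + (2 * F T + 2 * F (T + 1) + (2 * g 0 + 2 * g 0 + 6) * T) := by
    omega
  have h7 : (2 * g 0 + 2 * g 0 + 6) * T + 8 * T + 2 * g 0 + 6 ≤ (4 * g 0 + 14) * (T + 1) := by
    nlinarith
  omega

def m (t : ℕ) : ℕ := τ t / 2

lemma m_eq (t : ℕ) : τ t = 2 * m t := (τ_even t).symm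

lemma m_ge (t : ℕ) : g (col t) + t + 1 ≤ m t := by
  have h1 := τ_ge t
  have h2 := m_eq t
  omega

lemma m_sep {t s : ℕ} (h : t < s) :
    m t + g (col t) + g (col s) + (s - t) ≤ m s := by
  have h1 := τ_sep h
  have h2 := m_eq t
  have h3 := m_eq s
  omega

/-- the building blocks of the universal vector -/
def W (t : ℕ) : EE :=
  pk (τ t) (L (col t)) (fun i => ((2 : ℂ) ^ (m t))⁻¹ * yf (col t) i)

lemma normW (t : ℕ) : ‖W t‖ ≤ M (col t) / 2 ^ (m t) := by
  refine (pk_norm_le _ _ _).trans (le_of_eq ?_)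
  rw [div_eq_inv_mul, M, Md, Finset.mul_sum]
  refine Finset.sum_congr rfl fun i _ => ?_
  rw [norm_mul, norm_inv, norm_pow]
  norm_num
  rfl

lemma normW' (t : ℕ) : ‖W t‖ ≤ (2:ℝ) ^ (g (col t)) / 2 ^ (m t) :=
  (normW t).trans (by gcongr; exact M_le_g (col t))

lemma normW_geom (t : ℕ) : ‖W t‖ ≤ (1 / 2 : ℝ) ^ t := by
  refine (normW' t).trans ?_
  have h1 := m_ge t
  rw [div_pow, one_pow, div_le_div_iff₀ (by positivity) (by positivity), one_mul]
  calc (2:ℝ) ^ g (col t) * 2 ^ t = 2 ^ (g (col t) + t) := by rw [pow_add]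
    _ ≤ 2 ^ (m t) := pow_le_pow_right₀ one_le_two (by omega)

lemma summableNW : Summable (fun t => ‖W t‖) := by
  apply Summable.of_nonneg_of_le (fun t => norm_nonneg _) normW_geom
  exact summable_geometric_of_lt_one (by norm_num) (by norm_num)

lemma summableW : Summable W := Summable.of_norm summableNW

/-- the frequently universal vector -/
def xx : EE := ∑' t, W t


section withB

variable (B : EE →L[ℂ] EE)

lemma Bpow_apply (hB : ∀ (x : EE) (n : ℕ), B x n = x (n + 1)) :
    ∀ (k : ℕ) (x : EE) (i : ℕ), (B ^ k) x i = x (i + k) := by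
  intro k
  induction k with
  | zero => intro x i; simp
  | succ k ih =>
    intro x i
    rw [pow_succ, ContinuousLinearMap.mul_apply, ih, hB, add_assoc]

lemma normB_le (hB : ∀ (x : EE) (n : ℕ), B x n = x (n + 1)) (z : EE) : ‖B z‖ ≤ ‖z‖ := by
  have h1 := lp.hasSum_norm (E := fun _ : ℕ => ℂ) q2pos (B z)
  have h2 := lp.hasSum_norm (E := fun _ : ℕ => ℂ) q2pos z
  have key : ‖B z‖ ^ (2:ℝ≥0∞).toReal ≤ ‖z‖ ^ (2:ℝ≥0∞).toReal := by
    refine hasSum_le_inj (fun i => i + 1) (fun a b hab => by simpa using hab) ?_ ?_ h1 h2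
    · intro c _
      positivity
    · intro i
      rw [hB]
  by_contra hcon
  push_neg at hcon
  have := Real.rpow_lt_rpow (norm_nonneg z) hcon q2pos
  linarith

lemma normBpow_le (hB : ∀ (x : EE) (n : ℕ), B x n = x (n + 1)) (k : ℕ) (z : EE) :
    ‖(B ^ k) z‖ ≤ ‖z‖ := by
  induction k generalizing z with
  | zero => simp
  | succ k ih =>
    rw [pow_succ, ContinuousLinearMap.mul_apply]
    exact (ih (B z)).trans (normB_le B hB z)

lemma TW_zero (hB : ∀ (x : EE) (n : ℕ), B x n = x (n + 1)) {s t : ℕ} (h : s < t) :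
    (B ^ (τ t)) (W s) = 0 := by
  apply lp.ext
  funext i
  rw [Bpow_apply B hB, lp.coeFn_zero, Pi.zero_apply]
  apply pk_apply_out
  right
  have h1 : τ (s + 1) ≤ τ t := τ_mono.le_iff_le.2 h
  have h2 : τ s + 2 * g (col s) + 2 * g (col (s + 1)) + 6 = τ (s + 1) := rfl
  have h3 := L_le_g (col s)
  omega

lemma TW_main (hB : ∀ (x : EE) (n : ℕ), B x n = x (n + 1)) (lam : ℕ → ℂ)
    (hlam_even : ∀ n : ℕ, 1 ≤ n → lam (2 * n) = (2 : ℂ) ^ n) (t : ℕ) :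
    lam (τ t) • ((B ^ (τ t)) (W t)) = Y (col t) := by
  have hm1 : 1 ≤ m t := by have := m_ge t; omega
  have hlam : lam (τ t) = (2 : ℂ) ^ (m t) := by
    rw [m_eq t]; exact hlam_even (m t) hm1
  apply lp.ext
  funext i
  rw [lp.coeFn_smul, Pi.smul_apply, Bpow_apply B hB]
  by_cases hi : i < L (col t)
  · have h1 : W t (i + τ t) = ((2 : ℂ) ^ (m t))⁻¹ * yf (col t) i := by
      rw [add_comm]
      exact pk_apply_in _ _ _ hi
    have h2 : Y (col t) i = yf (col t) i := by
      have h3 := pk_apply_in 0 (L (col t)) (yf (col t)) hi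
      rw [zero_add] at h3
      exact h3
    rw [h1, h2, hlam, smul_eq_mul, ← mul_assoc,
      mul_inv_cancel₀ (pow_ne_zero _ two_ne_zero), one_mul]
  · have h1 : W t (i + τ t) = 0 := pk_apply_out _ _ _ (by right; omega)
    have h2 : Y (col t) i = 0 := by
      refine pk_apply_out 0 (L (col t)) (yf (col t)) ?_
      right
      omega
    rw [h1, h2, smul_zero]

lemma tail_term_bound (t r : ℕ) :
    ‖W (r + (t + 1))‖ ≤ ((2:ℝ) ^ (m t + g (col t) + 1))⁻¹ * (1 / 2) ^ r := by
  set s := r + (t + 1) with hs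
  refine (normW' s).trans ?_
  have hms : m t + g (col t) + g (col s) + (r + 1) ≤ m s := by
    have := m_sep (show t < s by omega)
    omega
  have e1 : (2:ℝ) ^ (g (col s)) / 2 ^ (m s) = (2:ℝ) ^ ((g (col s) : ℤ) - (m s : ℤ)) := by
    rw [zpow_sub₀ (by norm_num : (2:ℝ) ≠ 0), zpow_natCast, zpow_natCast]
  have e2 : ((2:ℝ) ^ (m t + g (col t) + 1))⁻¹ * (1 / 2) ^ r
      = (2:ℝ) ^ (-((m t + g (col t) + 1 : ℕ) : ℤ) + -(r : ℤ)) := by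
    rw [zpow_add₀ (by norm_num : (2:ℝ) ≠ 0), zpow_neg, zpow_neg, zpow_natCast, zpow_natCast,
      one_div, inv_pow]
  rw [e1, e2]
  apply zpow_le_zpow_right₀ one_le_two
  omega

lemma tail_bound (t : ℕ) :
    ∑' r, ‖W (r + (t + 1))‖ ≤ ((2:ℝ) ^ (m t + g (col t)))⁻¹ := by
  have hsb : Summable (fun r => ‖W (r + (t + 1))‖) :=
    (summable_nat_add_iff (f := fun n => ‖W n‖) (t + 1)).2 summableNW
  have hgb : Summable (fun r : ℕ => ((2:ℝ) ^ (m t + g (col t) + 1))⁻¹ * (1 / 2) ^ r) :=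
    (summable_geometric_of_lt_one (by norm_num) (by norm_num)).mul_left _
  refine (Summable.tsum_le_tsum (tail_term_bound t) hsb hgb).trans ?_
  rw [tsum_mul_left, tsum_geometric_two]
  rw [pow_add]
  rw [pow_one, mul_inv, mul_assoc, mul_comm ((2:ℝ))⁻¹ 2, mul_inv_cancel₀ (by norm_num : (2:ℝ) ≠ 0), mul_one]

lemma key (hB : ∀ (x : EE) (n : ℕ), B x n = x (n + 1)) (lam : ℕ → ℂ)
    (hlam_even : ∀ n : ℕ, 1 ≤ n → lam (2 * n) = (2 : ℂ) ^ n) (t : ℕ) :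
    ‖lam (τ t) • ((B ^ (τ t)) xx) - Y (col t)‖ ≤ ((2:ℝ) ^ (g (col t)))⁻¹ := by
  have hm1 : 1 ≤ m t := by have := m_ge t; omega
  have hlam : lam (τ t) = (2 : ℂ) ^ (m t) := by
    rw [m_eq t]; exact hlam_even (m t) hm1
  have hxx : xx = (∑ s ∈ Finset.range (t + 1), W s) + ∑' r, W (r + (t + 1)) :=
    (Summable.sum_add_tsum_nat_add (f := W) (t + 1) summableW).symm
  have hsum1 : ∑ s ∈ Finset.range (t + 1), (B ^ (τ t)) (W s) = (B ^ (τ t)) (W t) := by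
    refine Finset.sum_eq_single_of_mem t (Finset.self_mem_range_succ t) ?_
    intro b hb hbt
    exact TW_zero B hB (by rw [Finset.mem_range] at hb; omega)
  have hmap : lam (τ t) • ((B ^ (τ t)) xx) - Y (col t)
      = lam (τ t) • ((B ^ (τ t)) (∑' r, W (r + (t + 1)))) := by
    rw [hxx, map_add, map_sum, hsum1, smul_add, TW_main B hB lam hlam_even t,
      add_sub_cancel_left]
  rw [hmap, norm_smul, hlam]
  have hnl : ‖(2:ℂ) ^ (m t)‖ = (2:ℝ) ^ (m t) := by
    rw [norm_pow]
    norm_num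
  rw [hnl]
  have hR : ‖(B ^ (τ t)) (∑' r, W (r + (t + 1)))‖ ≤ ((2:ℝ) ^ (m t + g (col t)))⁻¹ := by
    refine ((normBpow_le B hB _ _).trans ?_)
    refine (norm_tsum_le_tsum_norm ((summable_nat_add_iff (f := fun n => ‖W n‖) (t + 1)).2 summableNW)).trans ?_
    exact tail_bound t
  calc (2:ℝ) ^ (m t) * ‖(B ^ (τ t)) (∑' r, W (r + (t + 1)))‖
      ≤ (2:ℝ) ^ (m t) * ((2:ℝ) ^ (m t + g (col t)))⁻¹ := by
        exact mul_le_mul_of_nonneg_left hR (by positivity)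
    _ = ((2:ℝ) ^ (g (col t)))⁻¹ := by
        rw [pow_add]
        field_simp

end withB

lemma single_zero (j : ℕ) : lp.single (E := fun _ : ℕ => ℂ) 2 j (0:ℂ) = 0 := by
  apply lp.ext
  funext i
  rcases eq_or_ne i j with h | h
  · subst h
    rw [lp.single_apply_self]
    rfl
  · rw [lp.single_apply_ne _ _ _ h]
    rfl

lemma single_sub (j : ℕ) (a b : ℂ) :
    lp.single (E := fun _ : ℕ => ℂ) 2 j (a - b) = lp.single 2 j a - lp.single 2 j b := by
  apply lp.ext
  funext i
  rw [lp.coeFn_sub, Pi.sub_apply]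
  rcases eq_or_ne i j with h | h
  · subst h
    rw [lp.single_apply_self, lp.single_apply_self, lp.single_apply_self]
  · rw [lp.single_apply_ne _ _ _ h, lp.single_apply_ne _ _ _ h, lp.single_apply_ne _ _ _ h,
      sub_zero]

lemma pk_zero_eq (N : ℕ) (v : ℕ → ℂ) :
    pk 0 N v = ∑ i ∈ Finset.range N, lp.single 2 i (v i) := by
  rw [pk]
  refine Finset.sum_congr rfl fun i _ => ?_
  rw [zero_add]

lemma pk_sub (o N : ℕ) (v w : ℕ → ℂ) :
    pk o N v - pk o N w = pk o N (fun i => v i - w i) := by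
  rw [pk, pk, pk, ← Finset.sum_sub_distrib]
  exact Finset.sum_congr rfl fun i _ => (single_sub _ _ _).symm

lemma pk_extend {N₁ N₂ : ℕ} (h : N₁ ≤ N₂) (v : ℕ → ℂ) (hv : ∀ i, N₁ ≤ i → v i = 0) :
    pk 0 N₂ v = pk 0 N₁ v := by
  rw [pk, pk]
  refine (Finset.sum_subset (Finset.range_subset_range.2 h) fun i _ hi => ?_).symm
  rw [Finset.mem_range, not_lt] at hi
  rw [hv i hi, single_zero]

lemma cq_dense (w : ℂ) {η : ℝ} (hη : 0 < η) : ∃ q : ℚ × ℚ, ‖cq q - w‖ < η := by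
  obtain ⟨a, ha⟩ := exists_rat_near w.re (show 0 < η/2 by linarith)
  obtain ⟨b, hb⟩ := exists_rat_near w.im (show 0 < η/2 by linarith)
  refine ⟨(a, b), ?_⟩
  have h := Complex.norm_le_abs_re_add_abs_im (cq (a, b) - w)
  have hre : (cq (a, b) - w).re = (a : ℝ) - w.re := by simp [cq]
  have him : (cq (a, b) - w).im = (b : ℝ) - w.im := by simp [cq]
  rw [hre, him] at h
  rw [abs_sub_comm] at ha hb
  calc ‖cq (a, b) - w‖ ≤ |(a:ℝ) - w.re| + |(b:ℝ) - w.im| := h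
    _ < η/2 + η/2 := by push_cast at ha hb ⊢; exact add_lt_add ha hb
    _ = η := by ring

lemma approx (z : EE) {δ : ℝ} (hδ : 0 < δ) : ∃ d : ℕ →₀ ℚ × ℚ, ‖Yd d - z‖ < δ := by
  have hs := lp.hasSum_single (E := fun _ : ℕ => ℂ) (p := 2) (by norm_num) z
  rw [HasSum] at hs
  obtain ⟨s₀, hs₀⟩ := (Metric.tendsto_atTop.1 hs) (δ/2) (by linarith)
  set N := s₀.sup id + 1 with hN
  have hsub : s₀ ⊆ Finset.range N := fun i hi => by
    rw [Finset.mem_range]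
    have := Finset.le_sup (f := id) hi
    simp only [id] at this
    omega
  have hclose : ‖(∑ i ∈ Finset.range N, lp.single (E := fun _ : ℕ => ℂ) 2 i (z i)) - z‖ < δ/2 := by
    have := hs₀ (Finset.range N) (Finset.le_iff_subset.2 hsub)
    rwa [dist_eq_norm] at this
  -- rational approximations of each coordinate
  have hη : 0 < δ / (2 * (N + 1)) := by positivity
  set q : ℕ → ℚ × ℚ := fun i => if i < N then Classical.choose (cq_dense (z i) hη) else 0
    with hq
  have hqspec : ∀ i, i < N → ‖cq (q i) - z i‖ < δ / (2 * (N + 1)) := by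
    intro i hi
    rw [hq]
    simp only [hi, if_pos]
    exact Classical.choose_spec (cq_dense (z i) hη)
  set d : ℕ →₀ ℚ × ℚ := Finsupp.onFinset (Finset.range N) q
    (fun a ha => by
      rw [Finset.mem_range]
      by_contra hcon
      rw [hq] at ha
      simp only [if_neg hcon] at ha
      exact ha rfl) with hd
  have hdq : ∀ i, d i = q i := fun i => rfl
  have hLd : Ld d ≤ N := by
    rw [Ld]
    have : d.support.sup id ≤ N - 1 := by
      apply Finset.sup_le
      intro i hi
      have := Finsupp.mem_support_iff.1 hi
      have hiN : i < N := by
        by_contra hcon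
        apply this
        rw [hdq, hq]
        simp only [if_neg hcon]
      simp only [id]
      omega
    omega
  refine ⟨d, ?_⟩
  have hYd : Yd d = pk 0 N (yfd d) := (pk_extend hLd (yfd d) fun i hi => yfd_eq_zero hi).symm
  have hsplit : Yd d - z = (pk 0 N (yfd d) - pk 0 N (fun i => z i))
      + ((∑ i ∈ Finset.range N, lp.single 2 i (z i)) - z) := by
    rw [hYd, pk_zero_eq N (fun i => z i)]
    abel
  rw [hsplit]
  refine (norm_add_le _ _).trans_lt ?_
  have h1 : ‖pk 0 N (yfd d) - pk 0 N (fun i => z i)‖ ≤ δ/2 := by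
    rw [pk_sub]
    refine (pk_norm_le _ _ _).trans ?_
    calc ∑ i ∈ Finset.range N, ‖yfd d i - z i‖
        ≤ ∑ _i ∈ Finset.range N, δ / (2 * (N + 1)) := by
          apply Finset.sum_le_sum
          intro i hi
          rw [Finset.mem_range] at hi
          exact (le_of_lt (by rw [yfd, hdq]; exact hqspec i hi))
      _ = N * (δ / (2 * (N + 1))) := by rw [Finset.sum_const, Finset.card_range, nsmul_eq_mul]
      _ ≤ δ/2 := by
          rw [show (N:ℝ) * (δ / (2 * (N + 1))) = (N * δ) / (2 * (N + 1)) by ring,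
            div_le_div_iff₀ (by positivity) (by norm_num)]
          nlinarith [hδ]
  linarith [hclose, h1]


lemma col_eq (s u : ℕ) : col (2 ^ (s + 1) * u + 2 ^ s - 1) = ψ s := by
  rw [col]
  congr 1
  rw [ν]
  have h2 : 1 ≤ 2 ^ s := Nat.one_le_two_pow
  have h1 : 2 ^ (s + 1) * u + 2 ^ s - 1 + 1 = 2 ^ s * (2 * u + 1) := by
    have h3 : 2 ^ (s + 1) * u = 2 ^ s * (2 * u) := by rw [pow_succ]; ring
    have h4 : 2 ^ s * (2 * u + 1) = 2 ^ s * (2 * u) + 2 ^ s := by ring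
    omega
  rw [h1, padicValNat.mul (by positivity) (by omega), padicValNat.prime_pow,
    padicValNat.eq_zero_of_not_dvd (by omega), add_zero]

end FUaux


namespace FUaux

lemma lowerDensity_ge {S : Set ℕ} {Q : ℕ} (hQ : 1 ≤ Q) (a : ℕ → ℕ)
    (ha_mono : StrictMono a) (ha_mem : ∀ u, a u ∈ S) (ha_pos : ∀ u, 1 ≤ a u)
    (ha_le : ∀ u, a u ≤ Q * (u + 1)) :
    (1 : ℝ) / (2 * Q) ≤ lowerDensity S := by
  have hQR : (0:ℝ) < Q := by exact_mod_cast hQ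
  apply Filter.le_liminf_of_le
  · apply Filter.IsBoundedUnder.isCoboundedUnder_ge
    apply Filter.isBoundedUnder_of
    refine ⟨1, fun N => ?_⟩
    rcases Nat.eq_zero_or_pos N with h | h
    · simp [h]
    · have hle : (S ∩ Set.Icc 1 N).ncard ≤ N := by
        have h1 : (S ∩ Set.Icc 1 N).ncard ≤ (Set.Icc 1 N).ncard :=
          Set.ncard_le_ncard Set.inter_subset_right (Set.finite_Icc 1 N)
        have h2 : (Set.Icc 1 N).ncard = N := by
          rw [← Nat.card_coe_set_eq, Nat.card_eq_card_toFinset]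
          simp
        omega
      rw [div_le_one (by exact_mod_cast h)]
      exact_mod_cast hle
  · filter_upwards [eventually_ge_atTop (2 * Q)] with N hN
    have hNpos : 0 < N := by omega
    set k := N / Q with hk
    have hdm := Nat.div_add_mod N Q
    rw [← hk] at hdm
    have hmod := Nat.mod_lt N (show 0 < Q by omega)
    have hk1 : 1 ≤ k := by
      rw [hk]
      rw [Nat.le_div_iff_mul_le (show 0 < Q by omega)]
      omega
    have hQk : Q ≤ Q * k := Nat.le_mul_of_pos_right Q hk1
    -- the image of Iio k under a sits inside S ∩ Icc 1 N
    have himg : a '' Set.Iio k ⊆ S ∩ Set.Icc 1 N := by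
      rintro n ⟨u, hu, rfl⟩
      rw [Set.mem_Iio] at hu
      refine ⟨ha_mem u, ha_pos u, ?_⟩
      have h1 : u + 1 ≤ k := hu
      have h2 : Q * (u + 1) ≤ Q * k := Nat.mul_le_mul_left Q h1
      have h3 := ha_le u
      omega
    have hcard : k ≤ (S ∩ Set.Icc 1 N).ncard := by
      have h1 : (a '' Set.Iio k).ncard ≤ (S ∩ Set.Icc 1 N).ncard :=
        Set.ncard_le_ncard himg ((Set.finite_Icc 1 N).inter_of_right S)
      have h2 : (a '' Set.Iio k).ncard = k := by
        rw [Set.ncard_image_of_injective _ ha_mono.injective, ← Finset.coe_Iio,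
          Set.ncard_coe_finset, Nat.card_Iio]
      omega
    have hkN : (N:ℝ) ≤ 2 * Q * k := by
      have h8 : 2 * Q * k = 2 * (Q * k) := by ring
      have h9 : N ≤ 2 * Q * k := by omega
      exact_mod_cast h9
    rw [div_le_div_iff₀ (by positivity) (by exact_mod_cast hNpos)]
    calc 1 * (N:ℝ) ≤ 2 * Q * k := by rw [one_mul]; exact hkN
      _ ≤ 2 * Q * ((S ∩ Set.Icc 1 N).ncard : ℝ) := by
          have : (k:ℝ) ≤ ((S ∩ Set.Icc 1 N).ncard : ℝ) := by exact_mod_cast hcard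
          nlinarith [hQR]
      _ = ((S ∩ Set.Icc 1 N).ncard : ℝ) * (2 * Q) := by ring

end FUaux

namespace FUaux

lemma main4 (B : EE →L[ℂ] EE) (hB : ∀ (x : EE) (n : ℕ), B x n = x (n + 1))
    (lam : ℕ → ℂ) (hlam_even : ∀ n : ℕ, 1 ≤ n → lam (2 * n) = (2 : ℂ) ^ n) :
    ∃ x : EE, ∀ U : Set EE, IsOpen U → U.Nonempty →
      0 < lowerDensity {n : ℕ | (lam n • (B ^ n)) x ∈ U} := by
  refine ⟨xx, fun U hU hUne => ?_⟩
  obtain ⟨z, hz⟩ := hUne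
  obtain ⟨r, hr, hball⟩ := Metric.isOpen_iff.1 hU z hz
  obtain ⟨d, hd⟩ := approx z (show 0 < r/4 by linarith)
  obtain ⟨k₀, hk₀⟩ := exists_nat_one_div_lt (show 0 < r/4 by linarith)
  obtain ⟨c, hc⟩ := e_surj (d, k₀)
  have hφ : φc c = d := by rw [φc, hc]
  have hkk : kk c = k₀ := by rw [kk, hc]
  have hYc : ‖Y c - z‖ < r/4 := by rw [Y, hφ]; exact hd
  have hgc : ((2:ℝ) ^ (g c))⁻¹ < r/4 := by
    have h1 := kk_le_g c
    rw [hkk] at h1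
    have h2 : (0:ℝ) < 2 ^ (g c) := by positivity
    have h3 : ((2:ℝ) ^ (g c))⁻¹ ≤ 1 / (k₀ + 1) := by
      rw [inv_eq_one_div, div_le_div_iff₀ h2 (by positivity)]
      nlinarith [h1]
    calc ((2:ℝ) ^ (g c))⁻¹ ≤ 1 / (k₀ + 1) := h3
      _ < r/4 := by exact_mod_cast hk₀
  set s₀ := Nat.pair c (g c) with hs₀
  set K := 4 * g 0 + 14 with hK
  set Q := K * 2 ^ (s₀ + 1) with hQdef
  have hQ1 : 1 ≤ Q := Nat.mul_pos (by omega) (pow_pos (by norm_num) _)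
  set tfun : ℕ → ℕ := fun u => 2 ^ (s₀ + 1) * u + 2 ^ s₀ - 1 with htfun
  have htf_mono : StrictMono tfun := by
    intro u v huv
    have h1 : 2 ^ (s₀ + 1) * u < 2 ^ (s₀ + 1) * v :=
      mul_lt_mul_of_pos_left huv (pow_pos (by norm_num) _)
    have h2 : 1 ≤ 2 ^ s₀ := Nat.one_le_two_pow
    simp only [htfun]
    omega
  have hcol : ∀ u, col (tfun u) = c := fun u => by
    simp only [htfun]
    rw [col_eq, hs₀, ψ_pair]
  set a : ℕ → ℕ := fun u => τ (tfun u) with ha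
  have hmem : ∀ u, a u ∈ {n : ℕ | (lam n • (B ^ n)) xx ∈ U} := by
    intro u
    have hkey := key B hB lam hlam_even (tfun u)
    rw [hcol u] at hkey
    apply hball
    rw [Metric.mem_ball, dist_eq_norm]
    have happ : (lam (τ (tfun u)) • (B ^ (τ (tfun u)))) xx
        = lam (τ (tfun u)) • ((B ^ (τ (tfun u))) xx) := rfl
    calc ‖(lam (τ (tfun u)) • (B ^ (τ (tfun u)))) xx - z‖
        ≤ ‖lam (τ (tfun u)) • ((B ^ (τ (tfun u))) xx) - Y c‖ + ‖Y c - z‖ := by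
          rw [happ]
          exact norm_sub_le_norm_sub_add_norm_sub _ _ _
      _ < r/4 + r/4 := by
          have := lt_of_le_of_lt hkey hgc
          linarith [hYc]
      _ < r := by linarith
  have ha_pos : ∀ u, 1 ≤ a u := fun u => by
    have := τ_ge (tfun u)
    simp only [ha]
    omega
  have ha_le : ∀ u, a u ≤ Q * (u + 1) := by
    intro u
    have h1 := τ_le (tfun u)
    rw [← hK] at h1
    have h2 : tfun u + 1 ≤ 2 ^ (s₀ + 1) * (u + 1) := by
      have h3 : 1 ≤ 2 ^ s₀ := Nat.one_le_two_pow
      have h4 : 2 ^ s₀ ≤ 2 ^ (s₀ + 1) := Nat.pow_le_pow_right (by norm_num) (by omega)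
      have h5 : 2 ^ (s₀ + 1) * (u + 1) = 2 ^ (s₀ + 1) * u + 2 ^ (s₀ + 1) := by ring
      simp only [htfun]
      omega
    have h6 : K * (tfun u + 1) ≤ K * (2 ^ (s₀ + 1) * (u + 1)) := Nat.mul_le_mul_left K h2
    have h7 : K * (2 ^ (s₀ + 1) * (u + 1)) = Q * (u + 1) := by rw [hQdef]; ring
    simp only [ha]
    omega
  have hld := lowerDensity_ge hQ1 a (τ_mono.comp htf_mono) hmem ha_pos ha_le
  calc (0:ℝ) < 1 / (2 * Q) := by positivity
    _ ≤ _ := hld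


lemma half_count (N : ℕ) : ({n : ℕ | ∃ m : ℕ, 1 ≤ m ∧ n = 2 * m} ∩ Set.Icc 1 N).ncard = N / 2 := by
  have h : {n : ℕ | ∃ m : ℕ, 1 ≤ m ∧ n = 2 * m} ∩ Set.Icc 1 N
      = (fun m => 2 * m) '' Set.Icc 1 (N / 2) := by
    ext n
    simp only [Set.mem_inter_iff, Set.mem_setOf_eq, Set.mem_image, Set.mem_Icc]
    constructor
    · rintro ⟨⟨m, hm, rfl⟩, h1, h2⟩
      exact ⟨m, ⟨hm, Nat.le_div_iff_mul_le (by norm_num) |>.2 (by omega)⟩, rfl⟩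
    · rintro ⟨m, ⟨hm1, hm2⟩, rfl⟩
      have h3 := Nat.div_mul_le_self N 2
      refine ⟨⟨m, hm1, rfl⟩, by omega, ?_⟩
      have h4 : m * 2 ≤ N / 2 * 2 := by omega
      omega
  rw [h, Set.ncard_image_of_injective _ (fun a b hab => by omega)]
  rw [← Nat.card_coe_set_eq, Nat.card_eq_card_toFinset]
  simp

lemma half_tendsto :
    Filter.Tendsto (fun N : ℕ => ((N / 2 : ℕ) : ℝ) / N) Filter.atTop (nhds (1/2)) := by
  have h0 : Filter.Tendsto (fun N : ℕ => (1:ℝ)/2 - ((N % 2 : ℕ):ℝ) / (2 * N))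
      Filter.atTop (nhds (1/2)) := by
    have h1 : Filter.Tendsto (fun N : ℕ => ((N % 2 : ℕ):ℝ) / (2 * N)) Filter.atTop (nhds 0) := by
      apply squeeze_zero (fun n => by positivity) (g := fun N : ℕ => 1 / (N:ℝ))
      · intro n
        rcases Nat.eq_zero_or_pos n with h | h
        · simp [h]
        · rw [div_le_div_iff₀ (by positivity) (by positivity)]
          have h1 : ((n % 2 : ℕ):ℝ) ≤ 1 := by
            have := Nat.mod_lt n (show 0 < 2 by norm_num)
            exact_mod_cast Nat.lt_succ_iff.1 this
          have h2 : (0:ℝ) < n := by exact_mod_cast h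
          nlinarith
      · exact tendsto_one_div_atTop_nhds_zero_nat
    simpa using (tendsto_const_nhds (x := (1:ℝ)/2)).sub h1
  apply h0.congr'
  filter_upwards [Filter.eventually_ge_atTop 1] with N hN
  have hmod : 2 * (N/2) + N % 2 = N := Nat.div_add_mod N 2
  have hmodR : 2 * ((N/2 : ℕ):ℝ) + ((N % 2:ℕ):ℝ) = (N:ℝ) := by exact_mod_cast hmod
  have hN' : (0:ℝ) < N := by exact_mod_cast hN
  field_simp
  nlinarith

lemma half_tendsto' :
    Filter.Tendsto
      (fun N : ℕ => ((({n : ℕ | ∃ m : ℕ, 1 ≤ m ∧ n = 2 * m} ∩ Set.Icc 1 N).ncard : ℝ)) / N)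
      Filter.atTop (nhds (1/2)) := by
  have : (fun N : ℕ => ((({n : ℕ | ∃ m : ℕ, 1 ≤ m ∧ n = 2 * m} ∩ Set.Icc 1 N).ncard : ℝ)) / N)
      = fun N : ℕ => ((N / 2 : ℕ) : ℝ) / N := by
    funext N
    rw [half_count N]
  rw [this]
  exact half_tendsto

end FUaux

end

theorem stmt7
    (B : lp (fun _ : ℕ => ℂ) 2 →L[ℂ] lp (fun _ : ℕ => ℂ) 2)
    (hB : ∀ (x : lp (fun _ : ℕ => ℂ) 2) (n : ℕ), B x n = x (n + 1))
    (lam : ℕ → ℂ)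
    (hlam_even : ∀ n : ℕ, 1 ≤ n → lam (2 * n) = (2 : ℂ) ^ n)
    (hlam_odd : ∀ n : ℕ, lam (2 * n + 1) = (2 : ℂ) ^ n) :
    lowerDensity {n : ℕ | ∃ m : ℕ, 1 ≤ m ∧ n = 2 * m} = 1 / 2 ∧
    upperDensity {n : ℕ | ∃ m : ℕ, 1 ≤ m ∧ n = 2 * m} = 1 / 2 ∧
    Filter.Tendsto (fun n : ℕ => ‖lam n‖ / ‖lam (n + 1)‖)
      (Filter.atTop ⊓ Filter.principal {n : ℕ | ∃ m : ℕ, 1 ≤ m ∧ n = 2 * m})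
      (nhds 1) ∧
    FrequentlyUniversal (fun n : ℕ => lam n • (B ^ n)) ∧
    ¬ RecurrentOp B := by
  refine ⟨?_, ?_, ?_, ?_, ?_⟩
  · exact FUaux.half_tendsto'.liminf_eq
  · exact FUaux.half_tendsto'.limsup_eq
  · apply Filter.Tendsto.congr' (f₁ := fun _ => (1:ℝ))
    · apply Filter.Eventually.filter_mono inf_le_right
      rw [Filter.eventually_principal]
      rintro n ⟨m, hm, rfl⟩
      show (1:ℝ) = ‖lam (2*m)‖ / ‖lam (2*m+1)‖
      rw [hlam_even m hm, hlam_odd m,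
        div_self (norm_ne_zero_iff.2 (pow_ne_zero _ two_ne_zero))]
    · exact tendsto_const_nhds
  · obtain ⟨x, hx⟩ := FUaux.main4 B hB lam hlam_even
    exact ⟨x, hx⟩
  · have hpow : ∀ (k : ℕ) (x : lp (fun _ : ℕ => ℂ) 2) (i : ℕ), (B^k) x i = x (i + k) := by
      intro k
      induction k with
      | zero => intro x i; simp
      | succ k ih =>
        intro x i
        rw [pow_succ, ContinuousLinearMap.mul_apply, ih, hB, add_assoc]
    intro hrec
    set e0 : lp (fun _ : ℕ => ℂ) 2 := lp.single 2 0 (1:ℂ) with he0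
    obtain ⟨k, hk, y, hyU, hyP⟩ := hrec (Metric.ball e0 (1/2)) Metric.isOpen_ball
      ⟨e0, Metric.mem_ball_self (by norm_num)⟩
    rw [Set.mem_preimage, Metric.mem_ball, dist_eq_norm] at hyP
    rw [Metric.mem_ball, dist_eq_norm] at hyU
    have two_ne : (2:ℝ≥0∞) ≠ 0 := by norm_num
    have h1 : ‖y k - 0‖ < 1/2 := by
      have := lp.norm_apply_le_norm two_ne (y - e0) k
      rw [lp.coeFn_sub] at this
      simp only [Pi.sub_apply] at this
      rw [he0, lp.single_apply_ne 2 0 _ (Nat.pos_iff_ne_zero.1 hk)] at this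
      linarith
    have h2 : ‖y k - 1‖ < 1/2 := by
      have := lp.norm_apply_le_norm two_ne ((B^k) y - e0) 0
      rw [lp.coeFn_sub] at this
      simp only [Pi.sub_apply] at this
      rw [he0, lp.single_apply_self, hpow, zero_add] at this
      linarith
    simp only [sub_zero] at h1
    have h3 := norm_sub_norm_le (1:ℂ) (y k)
    rw [norm_one, norm_sub_rev] at h3
    linarith
end

section
/- Let T be a bounded linear operator on a complex Banach space X. If T is recurrent, then the set of recurrent vectors for T is dense in X. Moreover, if T is invertible, then T is recurrent if and only if T^{-1} is recurrent. -/
open Filter Topology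

/-- A vector `x` is recurrent for `T` if `T^{n_k} x → x` along some strictly
increasing sequence of positive integers. -/
def RecurrentVector {X : Type*} [NormedAddCommGroup X] [NormedSpace ℂ X]
    (T : X →L[ℂ] X) (x : X) : Prop :=
  ∃ nk : ℕ → ℕ, StrictMono nk ∧ (∀ k : ℕ, 0 < nk k) ∧
    Filter.Tendsto (fun k : ℕ => (T ^ nk k) x) Filter.atTop (nhds x)

lemma aux_pow_inv {X : Type*} [NormedAddCommGroup X] [NormedSpace ℂ X]
    (A B : X →L[ℂ] X) (h : A.comp B = ContinuousLinearMap.id ℂ X) :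
    ∀ (k : ℕ) (x : X), (A ^ k) ((B ^ k) x) = x := by
  have hAB : ∀ y : X, A (B y) = y := by
    intro y
    rw [← ContinuousLinearMap.comp_apply, h]; rfl
  intro k
  induction k with
  | zero => intro x; simp
  | succ n ih =>
      intro x
      rw [pow_succ, pow_succ']
      simp only [ContinuousLinearMap.mul_apply]
      rw [hAB, ih]

lemma aux_rec_inv {X : Type*} [NormedAddCommGroup X] [NormedSpace ℂ X]
    (A B : X →L[ℂ] X) (h : A.comp B = ContinuousLinearMap.id ℂ X)
    (hB : RecurrentOp B) : RecurrentOp A := by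
  intro U hU hne
  obtain ⟨k, hk, y, hyU, hyT⟩ := hB U hU hne
  exact ⟨k, hk, (B ^ k) y, hyT, by
    simp only [Set.mem_preimage, aux_pow_inv A B h k y]; exact hyU⟩

theorem stmt15 {X : Type*} [NormedAddCommGroup X] [NormedSpace ℂ X]
    [CompleteSpace X] (T : X →L[ℂ] X) :
    (RecurrentOp T → Dense {x : X | RecurrentVector T x}) ∧
    (∀ S : X →L[ℂ] X,
      T.comp S = ContinuousLinearMap.id ℂ X →
      S.comp T = ContinuousLinearMap.id ℂ X →
      (RecurrentOp T ↔ RecurrentOp S)) := by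
  constructor
  · intro hT
    -- the Gδ sets
    set G : ℕ → Set X := fun N =>
      ⋃ k : ℕ, {x : X | 0 < k ∧ ‖(T ^ k) x - x‖ < 1 / (N + 1)} with hG
    have hopen : ∀ N, IsOpen (G N) := by
      intro N
      apply isOpen_iUnion
      intro k
      rcases Nat.eq_zero_or_pos k with hk | hk
      · subst hk
        convert isOpen_empty using 1
        ext x; simp
      · have : {x : X | 0 < k ∧ ‖(T ^ k) x - x‖ < 1 / (N + 1)} =
            {x : X | ‖(T ^ k) x - x‖ < 1 / (N + 1)} := by
          ext x; simp [hk]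
        rw [this]
        exact isOpen_lt (((T ^ k).continuous.sub continuous_id).norm) continuous_const
    have hdense : ∀ N, Dense (G N) := by
      intro N
      rw [Metric.dense_iff]
      intro x r hr
      have hδ : (0:ℝ) < 1 / (2 * (N + 1)) := by positivity
      have hball : IsOpen (Metric.ball x (min r (1 / (2 * ((N:ℝ) + 1))))) :=
        Metric.isOpen_ball
      have hbne : (Metric.ball x (min r (1 / (2 * ((N:ℝ) + 1))))).Nonempty := by
        rw [Metric.nonempty_ball]
        exact lt_min hr hδ
      obtain ⟨k, hk, y, hy1, hy2⟩ := hT _ hball hbne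
      rw [Set.mem_preimage] at hy2
      refine ⟨y, ?_, ?_⟩
      · rw [Metric.mem_ball] at hy1 ⊢
        exact hy1.trans_le (min_le_left _ _)
      · refine Set.mem_iUnion.2 ⟨k, hk, ?_⟩
        have h1 : dist ((T ^ k) y) x < 1 / (2 * ((N:ℝ) + 1)) :=
          (Metric.mem_ball.1 hy2).trans_le (min_le_right _ _)
        have h2 : dist y x < 1 / (2 * ((N:ℝ) + 1)) :=
          (Metric.mem_ball.1 hy1).trans_le (min_le_right _ _)
        have : ‖(T ^ k) y - y‖ ≤ dist ((T ^ k) y) x + dist y x := by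
          rw [dist_eq_norm, dist_eq_norm]
          calc ‖(T ^ k) y - y‖ = ‖((T ^ k) y - x) + (x - y)‖ := by abel_nf
            _ ≤ ‖(T ^ k) y - x‖ + ‖x - y‖ := norm_add_le _ _
            _ = ‖(T ^ k) y - x‖ + ‖y - x‖ := by rw [norm_sub_rev x y]
        calc ‖(T ^ k) y - y‖ ≤ dist ((T ^ k) y) x + dist y x := this
          _ < 1 / (2 * ((N:ℝ) + 1)) + 1 / (2 * ((N:ℝ) + 1)) := add_lt_add h1 h2
          _ = 1 / ((N:ℝ) + 1) := by
              field_simp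
              ring_nf
    have hBaire : Dense (⋂ N, G N) := dense_iInter_of_isOpen hopen hdense
    refine hBaire.mono ?_
    intro x hx
    simp only [Set.mem_iInter, hG, Set.mem_iUnion, Set.mem_setOf_eq] at hx
    -- extract: ∀ ε > 0 ∃ k > 0 small error
    have H : ∀ ε : ℝ, 0 < ε → ∃ k : ℕ, 0 < k ∧ ‖(T ^ k) x - x‖ < ε := by
      intro ε hε
      obtain ⟨N, hN⟩ := exists_nat_one_div_lt hε
      obtain ⟨k, hk, hke⟩ := hx N
      exact ⟨k, hk, hke.trans hN⟩
    -- arbitrarily large k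
    have key : ∀ m : ℕ, ∀ ε : ℝ, 0 < ε →
        ∃ k : ℕ, m ≤ k ∧ 0 < k ∧ ‖(T ^ k) x - x‖ < ε := by
      intro m
      induction m with
      | zero => intro ε hε
                obtain ⟨k, hk, hke⟩ := H ε hε
                exact ⟨k, Nat.zero_le _, hk, hke⟩
      | succ m ih =>
          intro ε hε
          obtain ⟨a, ha, hae⟩ := H (ε / 2) (by positivity)
          set C : ℝ := ‖(T ^ a : X →L[ℂ] X)‖ with hC
          have hC0 : 0 ≤ C := norm_nonneg _
          obtain ⟨b, hbm, hb, hbe⟩ := ih (ε / (2 * (C + 1))) (by positivity)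
          refine ⟨a + b, by omega, by omega, ?_⟩
          have hdecomp : (T ^ (a + b)) x - x
              = (T ^ a) ((T ^ b) x - x) + ((T ^ a) x - x) := by
            rw [pow_add, ContinuousLinearMap.mul_apply, map_sub]
            abel
          calc ‖(T ^ (a + b)) x - x‖
              = ‖(T ^ a) ((T ^ b) x - x) + ((T ^ a) x - x)‖ := by rw [hdecomp]
            _ ≤ ‖(T ^ a) ((T ^ b) x - x)‖ + ‖(T ^ a) x - x‖ := norm_add_le _ _
            _ ≤ C * ‖(T ^ b) x - x‖ + ‖(T ^ a) x - x‖ :=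
                add_le_add (ContinuousLinearMap.le_opNorm _ _) le_rfl
            _ ≤ C * (ε / (2 * (C + 1))) + ε / 2 :=
                add_le_add (mul_le_mul_of_nonneg_left hbe.le hC0) hae.le
            _ < ε := by
                have h1 : C * (ε / (2 * (C + 1))) < ε / 2 := by
                  have heq : C * (ε / (2 * (C + 1))) = ε * C / (2 * (C + 1)) := by
                    ring
                  rw [heq, div_lt_div_iff₀ (by positivity) (by norm_num : (0:ℝ) < 2)]
                  nlinarith
                linarith
    -- build the strictly increasing sequence
    have key2 : ∀ (m j : ℕ), ∃ k : ℕ, m < k ∧ ‖(T ^ k) x - x‖ < 1 / (j + 1) := by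
      intro m j
      obtain ⟨k, hk1, _, hk3⟩ := key (m + 1) (1 / (j + 1)) (by positivity)
      exact ⟨k, hk1, hk3⟩
    choose F hF1 hF2 using key2
    set n : ℕ → ℕ := fun k => Nat.rec (F 0 0) (fun k nk => F nk (k + 1)) k with hn
    have hn0 : n 0 = F 0 0 := rfl
    have hns : ∀ k, n (k + 1) = F (n k) (k + 1) := fun k => rfl
    have hmono : StrictMono n := by
      apply strictMono_nat_of_lt_succ
      intro k
      rw [hns]
      exact hF1 (n k) (k + 1)
    have hpos : ∀ k, 0 < n k := by
      intro k
      cases k with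
      | zero => exact Nat.lt_of_le_of_lt (Nat.zero_le 0) (hF1 0 0)
      | succ m => exact Nat.lt_of_le_of_lt (Nat.zero_le _) (hns m ▸ hF1 (n m) (m+1))
    have herr : ∀ k, ‖(T ^ n k) x - x‖ < 1 / ((k:ℝ) + 1) := by
      intro k
      cases k with
      | zero => simpa [hn0] using hF2 0 0
      | succ m =>
          rw [hns]
          exact hF2 (n m) (m + 1)
    refine ⟨n, hmono, hpos, ?_⟩
    rw [tendsto_iff_norm_sub_tendsto_zero]
    apply squeeze_zero (fun k => norm_nonneg _) (fun k => (herr k).le)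
    exact tendsto_one_div_add_atTop_nhds_zero_nat
  · intro S hTS hST
    exact ⟨fun h => aux_rec_inv S T hST h, fun h => aux_rec_inv T S hTS h⟩
end

section
/- Let X be a non-zero complex Banach space, a ∈ ℂ, and let aI denote the scalar multiple of the identity operator on X. Then the following are equivalent: (i) aI is recurrent; (ii) aI is topologically multiply recurrent; (iii) |a| = 1. -/
open Filter Topology

/-- Topological multiple recurrence for an operator. -/
def TopMultiplyRecurrent {X : Type*} [NormedAddCommGroup X] [NormedSpace ℂ X]
    (T : X →L[ℂ] X) : Prop :=
  ∀ U : Set X, IsOpen U → U.Nonempty → ∀ m : ℕ, 0 < m →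
    ∃ k : ℕ, 0 < k ∧
      (⋂ j ∈ Finset.range (m + 1), (T ^ (j * k) : X →L[ℂ] X) ⁻¹' U).Nonempty

/-- On the unit circle, some positive power of `a` is close to `1`. -/
theorem stmt16_close_pow (a : ℂ) (ha : ‖a‖ = 1) (ε : ℝ) (hε : 0 < ε) :
    ∃ k : ℕ, 0 < k ∧ ‖a ^ k - 1‖ < ε := by
  have hmem : ∀ n : ℕ, a ^ n ∈ Metric.sphere (0:ℂ) 1 := by
    intro n; simp [mem_sphere_iff_norm, norm_pow, ha]
  obtain ⟨c, hc, φ, hφ, htend⟩ := (isCompact_sphere (0:ℂ) 1).tendsto_subseq hmem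
  have hc0 : c ≠ 0 := by
    intro h; rw [h] at hc; simp at hc
  have ha0 : a ≠ 0 := by intro h; rw [h] at ha; simp at ha
  have h2 : Filter.Tendsto (fun n => a ^ (φ (n+1)) / a ^ (φ n)) Filter.atTop (nhds (c / c)) :=
    Filter.Tendsto.div (htend.comp (Filter.tendsto_add_atTop_nat 1)) htend hc0
  rw [div_self hc0] at h2
  obtain ⟨N, hN⟩ := (Metric.tendsto_atTop.mp h2) ε hε
  have hlt : φ N < φ (N+1) := hφ (Nat.lt_succ_self N)
  refine ⟨φ (N+1) - φ N, Nat.sub_pos_of_lt hlt, ?_⟩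
  rw [pow_sub₀ a ha0 hlt.le]
  simpa [dist_eq_norm, div_eq_mul_inv] using hN N le_rfl

theorem stmt16_pow_close (a : ℂ) (ha : ‖a‖ = 1) (k j : ℕ) :
    ‖a ^ (j * k) - 1‖ ≤ j * ‖a ^ k - 1‖ := by
  induction j with
  | zero => simp
  | succ j ih =>
    have h : a ^ ((j+1) * k) - 1 = a ^ (j*k) * (a ^ k - 1) + (a ^ (j*k) - 1) := by
      rw [add_mul, one_mul, pow_add]; ring
    rw [h]
    calc ‖a ^ (j*k) * (a ^ k - 1) + (a ^ (j*k) - 1)‖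
        ≤ ‖a ^ (j*k) * (a ^ k - 1)‖ + ‖a ^ (j*k) - 1‖ := norm_add_le _ _
      _ ≤ ‖a ^ k - 1‖ + j * ‖a ^ k - 1‖ := by
          rw [norm_mul, norm_pow, ha, one_pow, one_mul]; linarith
      _ ≤ (j+1 : ℕ) * ‖a ^ k - 1‖ := by push_cast; linarith

theorem stmt16_pow_apply {X : Type*} [NormedAddCommGroup X] [NormedSpace ℂ X]
    (a : ℂ) (n : ℕ) (x : X) :
    ((a • ContinuousLinearMap.id ℂ X) ^ n) x = a ^ n • x := by
  rw [← ContinuousLinearMap.one_def, smul_pow, one_pow]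
  simp

theorem stmt16 {X : Type*} [NormedAddCommGroup X] [NormedSpace ℂ X]
    [CompleteSpace X] [Nontrivial X] (a : ℂ) :
    (RecurrentOp (a • ContinuousLinearMap.id ℂ X) ↔
      TopMultiplyRecurrent (a • ContinuousLinearMap.id ℂ X)) ∧
    (TopMultiplyRecurrent (a • ContinuousLinearMap.id ℂ X) ↔ ‖a‖ = 1) := by
  set T := a • ContinuousLinearMap.id ℂ X with hT
  -- (iii) → (ii)
  have h1 : ‖a‖ = 1 → TopMultiplyRecurrent T := by
    intro ha U hU ⟨x, hx⟩ m hm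
    obtain ⟨ε, hε, hball⟩ := Metric.isOpen_iff.mp hU x hx
    have hden : (0:ℝ) < (m+1) * (‖x‖ + 1) := by positivity
    obtain ⟨k, hk, hak⟩ := stmt16_close_pow a ha (ε / ((m+1) * (‖x‖ + 1)))
      (div_pos hε hden)
    refine ⟨k, hk, x, ?_⟩
    simp only [Set.mem_iInter, Set.mem_preimage, Finset.mem_range]
    intro j hj
    apply hball
    rw [Metric.mem_ball, dist_eq_norm, stmt16_pow_apply]
    have key : ‖a ^ (j*k) • x - x‖ = ‖a ^ (j*k) - 1‖ * ‖x‖ := by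
      rw [← norm_smul, sub_smul, one_smul]
    rw [key]
    have h2 := stmt16_pow_close a ha k j
    have hjm : (j:ℝ) ≤ m := by exact_mod_cast Nat.lt_succ_iff.mp hj
    have hx0 : (0:ℝ) ≤ ‖x‖ := norm_nonneg x
    have hnn : (0:ℝ) ≤ ‖a ^ k - 1‖ := norm_nonneg _
    have h3 : ‖a ^ (j*k) - 1‖ * ‖x‖ ≤ (m:ℝ) * ‖a ^ k - 1‖ * ‖x‖ := by
      have : ‖a ^ (j*k) - 1‖ ≤ (m:ℝ) * ‖a ^ k - 1‖ :=
        h2.trans (by nlinarith)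
      nlinarith
    have h4 : (m:ℝ) * ‖a ^ k - 1‖ * ‖x‖ < ε := by
      have hm1 : (0:ℝ) < m + 1 := by positivity
      have := (lt_div_iff₀ hden).mp hak
      nlinarith [norm_nonneg (a ^ k - 1), hε]
    linarith
  -- (ii) → (i)
  have h2 : TopMultiplyRecurrent T → RecurrentOp T := by
    intro ht U hU hne
    obtain ⟨k, hk, x, hx⟩ := ht U hU hne 1 one_pos
    simp only [Set.mem_iInter, Set.mem_preimage, Finset.mem_range] at hx
    have h0 := hx 0 (by norm_num)
    have h1' := hx 1 (by norm_num)
    refine ⟨k, hk, x, ?_, ?_⟩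
    · simpa using h0
    · simpa using h1'
  -- (i) → (iii)
  have h3 : RecurrentOp T → ‖a‖ = 1 := by
    intro hr
    by_contra hne
    obtain ⟨x₀, hx₀⟩ := exists_ne (0 : X)
    have hx₀n : (0:ℝ) < ‖x₀‖ := norm_pos_iff.mpr hx₀
    rcases lt_or_gt_of_ne hne with hlt | hgt
    · -- ‖a‖ < 1
      set ε := ‖x₀‖ * (1 - ‖a‖) / 4 with hεdef
      have hε : 0 < ε := by
        apply div_pos _ (by norm_num : (0:ℝ) < 4)
        nlinarith
      obtain ⟨k, hk, y, hy1, hy2⟩ := hr (Metric.ball x₀ ε) Metric.isOpen_ball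
        ⟨x₀, Metric.mem_ball_self hε⟩
      rw [Set.mem_preimage, hT, stmt16_pow_apply] at hy2
      rw [Metric.mem_ball, dist_eq_norm] at hy1 hy2
      have hb1 : |‖y‖ - ‖x₀‖| < ε := lt_of_le_of_lt (abs_norm_sub_norm_le _ _) hy1
      have hb2 : |‖a ^ k • y‖ - ‖x₀‖| < ε :=
        lt_of_le_of_lt (abs_norm_sub_norm_le _ _) hy2
      rw [abs_lt] at hb1 hb2
      have hpow : ‖a‖ ^ k ≤ ‖a‖ :=
        calc ‖a‖ ^ k ≤ ‖a‖ ^ 1 :=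
          pow_le_pow_of_le_one (norm_nonneg a) hlt.le hk
        _ = ‖a‖ := pow_one _
      have hn : ‖a ^ k • y‖ = ‖a‖ ^ k * ‖y‖ := by rw [norm_smul, norm_pow]
      have hy0 : (0:ℝ) ≤ ‖y‖ := norm_nonneg y
      have h0a : (0:ℝ) ≤ ‖a‖ := norm_nonneg a
      nlinarith [hb1.1, hb1.2, hb2.1, hb2.2]
    · -- ‖a‖ > 1
      set ε := ‖x₀‖ * (‖a‖ - 1) / (2 * (1 + ‖a‖)) with hεdef
      have h1a : (0:ℝ) < 1 + ‖a‖ := by positivity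
      have hε : 0 < ε := by
        apply div_pos _ (by positivity)
        nlinarith
      obtain ⟨k, hk, y, hy1, hy2⟩ := hr (Metric.ball x₀ ε) Metric.isOpen_ball
        ⟨x₀, Metric.mem_ball_self hε⟩
      rw [Set.mem_preimage, hT, stmt16_pow_apply] at hy2
      rw [Metric.mem_ball, dist_eq_norm] at hy1 hy2
      have hb1 : |‖y‖ - ‖x₀‖| < ε := lt_of_le_of_lt (abs_norm_sub_norm_le _ _) hy1
      have hb2 : |‖a ^ k • y‖ - ‖x₀‖| < ε :=
        lt_of_le_of_lt (abs_norm_sub_norm_le _ _) hy2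
      rw [abs_lt] at hb1 hb2
      have hpow : ‖a‖ ≤ ‖a‖ ^ k := le_self_pow₀ hgt.le (Nat.pos_iff_ne_zero.mp hk)
      have hn : ‖a ^ k • y‖ = ‖a‖ ^ k * ‖y‖ := by rw [norm_smul, norm_pow]
      have hy0 : (0:ℝ) < ‖y‖ := by
        have := hb1.1
        have hεlt : ε < ‖x₀‖ := by
          rw [hεdef, div_lt_iff₀ (by positivity)]
          nlinarith
        linarith
      have hεb : ε * (2 * (1 + ‖a‖)) = ‖x₀‖ * (‖a‖ - 1) := by
        rw [hεdef]; field_simp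
      nlinarith [hb1.1, hb1.2, hb2.1, hb2.2]
  exact ⟨⟨fun hr => h1 (h3 hr), h2⟩, ⟨fun ht => h3 (h2 ht), fun ha => h1 ha⟩⟩
end
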